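/- arXiv:1807.05354 — 4 statements merged into one kernel-verified Lean document; each statement's English description precedes it below -/
import Mathlib

section
/- For the d-dimensional depolarizing channel D_p(ρ) = (1−p)ρ + p·(Tr ρ)·1/d with 0 ≤ p ≤ 1, the optimal value of the SDP inf{ Tr V : J_{D_p} ≤ 1_A ⊗ V } equals d²(1−p) + p, where J_{D_p} is the Choi matrix of D_p. Consequently the zero-error NS-assisted simulation cost is S_{NS,0}(D_p) = ½ log₂(d²(1−p)+p). -/
set_option maxRecDepth 8000


open Matrix Kronecker
open scoped ComplexOrder

noncomputable section

/-- The Loewner order: `A ≤ B` iff `B - A` is positive semidefinite. -/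
def loe {n : Type*} [Fintype n] (A B : Matrix n n ℂ) : Prop := (B - A).PosSemidef

/-- The Choi–Jamiołkowski matrix `J_Φ = ∑_{i,j} |i⟩⟨j| ⊗ Φ(|i⟩⟨j|)` of a map `Φ`. -/
def Choi {d₁ d₂ : Type*} [Fintype d₁] [DecidableEq d₁] [Fintype d₂] [DecidableEq d₂]
    (Φ : Matrix d₁ d₁ ℂ → Matrix d₂ d₂ ℂ) : Matrix (d₁ × d₂) (d₁ × d₂) ℂ :=
  ∑ i, ∑ j, (Matrix.single i j (1 : ℂ)) ⊗ₖ Φ (Matrix.single i j (1 : ℂ))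

/-- SDP value `inf { Tr V : J ≤ 1_A ⊗ V }`, `V` Hermitian. -/
def sdpVal {a b : Type*} [Fintype a] [DecidableEq a] [Fintype b]
    (J : Matrix (a × b) (a × b) ℂ) : ℝ :=
  sInf {r : ℝ | ∃ V : Matrix b b ℂ, V.IsHermitian ∧
    loe J ((1 : Matrix a a ℂ) ⊗ₖ V) ∧ r = (V.trace).re}

/-- The zero-error NS-assisted simulation cost `S_{NS,0} = ½ log₂ f(J)`. -/
def SNS0 {a b : Type*} [Fintype a] [DecidableEq a] [Fintype b]
    (J : Matrix (a × b) (a × b) ℂ) : ℝ :=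
  (1 / 2) * Real.logb 2 (sdpVal J)

/-- The `d`-dimensional depolarizing channel `D_p(ρ) = (1-p)ρ + p (Tr ρ) 1/d`. -/
def depol (d : ℕ) (p : ℝ) (ρ : Matrix (Fin d) (Fin d) ℂ) : Matrix (Fin d) (Fin d) ℂ :=
  ((1 - p : ℝ) : ℂ) • ρ + ((p / d : ℝ) : ℂ) • ρ.trace • (1 : Matrix (Fin d) (Fin d) ℂ)

namespace S7

def v (d : ℕ) : Fin d × Fin d → ℂ := fun x => if x.1 = x.2 then 1 else 0

def W (d : ℕ) : Matrix (Fin d × Fin d) (Fin d × Fin d) ℂ := vecMulVec (v d) (v d)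

lemma star_v (d : ℕ) : star (v d) = v d := by
  funext x; simp [v]

lemma dot_vv (d : ℕ) : v d ⬝ᵥ v d = (d : ℂ) := by
  simp [dotProduct, v, Fintype.sum_prod_type, Finset.sum_ite_eq]

lemma choi_apply {d₁ d₂ : Type*} [Fintype d₁] [DecidableEq d₁] [Fintype d₂] [DecidableEq d₂]
    (Φ : Matrix d₁ d₁ ℂ → Matrix d₂ d₂ ℂ) (a c : d₁) (b e : d₂) :
    Choi Φ (a, b) (c, e) = Φ (Matrix.single a c 1) b e := by
  rw [Choi]
  simp only [Matrix.sum_apply, kroneckerMap_apply]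
  rw [Finset.sum_eq_single a, Finset.sum_eq_single c]
  · simp
  · intro j _ hj
    have h0 : Matrix.single a j (1:ℂ) a c = 0 :=
      Matrix.single_apply_of_ne a j 1 a c (by tauto)
    rw [h0, zero_mul]
  · simp
  · intro i _ hi
    rw [Finset.sum_eq_zero]
    intro j _
    have h0 : Matrix.single i j (1:ℂ) a c = 0 :=
      Matrix.single_apply_of_ne i j 1 a c (by tauto)
    rw [h0, zero_mul]
  · simp

lemma choi_eq (d : ℕ) (p : ℝ) :
    Choi (depol d p) = ((1 - p : ℝ) : ℂ) • W d + ((p / d : ℝ) : ℂ) • 1 := by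
  ext ⟨a, b⟩ ⟨c, e⟩
  rw [choi_apply]
  simp only [depol, W, v, Matrix.add_apply, Matrix.smul_apply, vecMulVec_apply,
    Matrix.smul_apply, Matrix.one_apply, Matrix.trace, Matrix.diag, smul_eq_mul,
    Matrix.single, Matrix.of_apply, Prod.mk.injEq]
  have hs : (∑ x : Fin d, if a = x ∧ c = x then (1:ℂ) else 0) = if a = c then 1 else 0 := by
    simp [ite_and, Finset.sum_ite_eq, eq_comm]
  rw [hs]
  split_ifs <;> first | tauto | (push_cast; ring)


lemma W_herm (d : ℕ) : (W d).IsHermitian := by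
  ext x y
  simp only [W, conjTranspose_apply, vecMulVec_apply, v, star_mul', RCLike.star_def]
  split_ifs <;> simp <;> ring

lemma W_mul_W (d : ℕ) : W d * W d = (d : ℂ) • W d := by
  ext x y
  simp only [W, Matrix.mul_apply, vecMulVec_apply, Matrix.smul_apply, smul_eq_mul]
  have : ∀ z, v d x * v d z * (v d z * v d y) = (v d x * v d y) * (v d z * v d z) := by
    intro z; ring
  simp_rw [this, ← Finset.mul_sum]
  have hvv : (∑ z, v d z * v d z) = (d : ℂ) := dot_vv d
  rw [hvv]; ring

def M (d : ℕ) : Matrix (Fin d × Fin d) (Fin d × Fin d) ℂ := 1 - ((d : ℂ))⁻¹ • W d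

lemma M_herm (d : ℕ) : (M d).IsHermitian := by
  unfold M
  apply Matrix.IsHermitian.sub Matrix.isHermitian_one
  unfold Matrix.IsHermitian
  rw [Matrix.conjTranspose_smul, (W_herm d).eq]
  congr 1
  simp [RCLike.star_def, Complex.conj_inv]

lemma M_idem (d : ℕ) (hd : 0 < d) : M d * M d = M d := by
  have hdc : (d : ℂ) ≠ 0 := Nat.cast_ne_zero.mpr hd.ne'
  unfold M
  rw [sub_mul, one_mul, mul_sub, mul_one, Matrix.smul_mul, Matrix.mul_smul, smul_smul,
    W_mul_W, smul_smul]
  have hc : (d : ℂ)⁻¹ * (d : ℂ)⁻¹ * (d : ℂ) = (d : ℂ)⁻¹ := by field_simp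
  rw [hc]
  abel

lemma M_psd (d : ℕ) (hd : 0 < d) : (M d).PosSemidef := by
  have h : (M d)ᴴ * M d = M d := by rw [(M_herm d).eq, M_idem d hd]
  exact h ▸ Matrix.posSemidef_conjTranspose_mul_self (M d)

lemma smul_psd {n : Type*} [Fintype n] {A : Matrix n n ℂ} (hA : A.PosSemidef) (c : ℝ)
    (hc : 0 ≤ c) : ((c : ℂ) • A).PosSemidef := by
  refine Matrix.PosSemidef.of_dotProduct_mulVec_nonneg ?_ ?_
  · unfold Matrix.IsHermitian
    rw [Matrix.conjTranspose_smul, hA.1.eq, RCLike.star_def, Complex.conj_ofReal]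
  · intro x
    rw [Matrix.smul_mulVec, dotProduct_smul]
    exact mul_nonneg (by exact_mod_cast Complex.real_le_real.mpr hc) (hA.dotProduct_mulVec_nonneg x)

/-- quadratic forms at `v` -/
lemma W_mulVec (d : ℕ) : W d *ᵥ v d = (d : ℂ) • v d := by
  ext x
  simp only [W, Matrix.mulVec, dotProduct, vecMulVec_apply, Pi.smul_apply, smul_eq_mul]
  have : ∀ z, v d x * v d z * v d z = v d x * (v d z * v d z) := by intro z; ring
  simp_rw [this, ← Finset.mul_sum]
  have hvv : (∑ z, v d z * v d z) = (d : ℂ) := dot_vv d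
  rw [hvv]; ring

lemma dot_v_W_v (d : ℕ) : star (v d) ⬝ᵥ (W d *ᵥ v d) = (d : ℂ) * (d : ℂ) := by
  rw [W_mulVec, star_v, dotProduct_smul, dot_vv]
  simp [smul_eq_mul, mul_comm]

lemma dot_v_one_v (d : ℕ) : star (v d) ⬝ᵥ ((1 : Matrix (Fin d × Fin d) (Fin d × Fin d) ℂ) *ᵥ v d) = (d : ℂ) := by
  rw [Matrix.one_mulVec, star_v, dot_vv]

lemma dot_v_kron_v (d : ℕ) (V : Matrix (Fin d) (Fin d) ℂ) :
    star (v d) ⬝ᵥ (((1 : Matrix (Fin d) (Fin d) ℂ) ⊗ₖ V) *ᵥ v d) = V.trace := by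
  rw [star_v]
  simp only [dotProduct, Matrix.mulVec, v, Fintype.sum_prod_type,
    kroneckerMap_apply, Matrix.one_apply, Matrix.trace, Matrix.diag]
  simp [dotProduct, ite_and, mul_ite, ite_mul, Finset.sum_ite_eq, Finset.sum_ite_eq',
    eq_comm]




lemma feas_eq (d : ℕ) (hd : 0 < d) (p : ℝ) :
    ((((d : ℝ) * (1 - p) + p / (d : ℝ) : ℝ)) : ℂ) • (1 : Matrix (Fin d × Fin d) (Fin d × Fin d) ℂ)
      - (((1 - p : ℝ) : ℂ) • W d + ((p / d : ℝ) : ℂ) • 1)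
      = ((((d : ℝ) * (1 - p)) : ℝ) : ℂ) • M d := by
  have hdc : (d : ℂ) ≠ 0 := Nat.cast_ne_zero.mpr hd.ne'
  rw [M]
  ext ⟨a, b⟩ ⟨c', e⟩
  simp only [Matrix.sub_apply, Matrix.add_apply, Matrix.smul_apply, Matrix.one_apply,
    smul_eq_mul, W, vecMulVec_apply, v, Prod.mk.injEq]
  split_ifs <;> first | tauto | (push_cast; field_simp; try ring)


end S7

/-- The SDP value for the depolarizing channel equals `d²(1-p) + p`. -/
theorem stmt_7 (d : ℕ) (hd : 0 < d) (p : ℝ) (hp0 : 0 ≤ p) (hp1 : p ≤ 1) :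
    sdpVal (Choi (depol d p)) = d ^ 2 * (1 - p) + p ∧
    SNS0 (Choi (depol d p)) = (1 / 2) * Real.logb 2 (d ^ 2 * (1 - p) + p) := by
  have hd0 : (d : ℝ) ≠ 0 := Nat.cast_ne_zero.mpr hd.ne'
  have hdc : (d : ℂ) ≠ 0 := Nat.cast_ne_zero.mpr hd.ne'
  set c : ℝ := (d : ℝ) ^ 2 * (1 - p) + p with hc
  set β : ℝ := (d : ℝ) * (1 - p) + p / (d : ℝ) with hβ
  set V₀ : Matrix (Fin d) (Fin d) ℂ := ((β : ℝ) : ℂ) • 1 with hV₀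
  have hV₀herm : V₀.IsHermitian := by
    unfold Matrix.IsHermitian
    rw [hV₀, Matrix.conjTranspose_smul, Matrix.conjTranspose_one, RCLike.star_def,
      Complex.conj_ofReal]
  have hkron : (1 : Matrix (Fin d) (Fin d) ℂ) ⊗ₖ V₀ = ((β : ℂ)) • 1 := by
    rw [hV₀, Matrix.kronecker_smul, Matrix.one_kronecker_one]
  have hfeaseq : (1 : Matrix (Fin d) (Fin d) ℂ) ⊗ₖ V₀ - Choi (depol d p)
      = ((((d : ℝ) * (1 - p)) : ℝ) : ℂ) • S7.M d := by
    rw [hkron, S7.choi_eq, hβ]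
    exact S7.feas_eq d hd p
  have hfeas : loe (Choi (depol d p)) ((1 : Matrix (Fin d) (Fin d) ℂ) ⊗ₖ V₀) := by
    show ((1 : Matrix (Fin d) (Fin d) ℂ) ⊗ₖ V₀ - Choi (depol d p)).PosSemidef
    rw [hfeaseq]
    exact S7.smul_psd (S7.M_psd d hd) _ (mul_nonneg (Nat.cast_nonneg d) (by linarith))
  have htr : (V₀.trace).re = c := by
    rw [hV₀, Matrix.trace_smul, Matrix.trace_one]
    simp only [smul_eq_mul]
    have : ((β : ℂ) * (Fintype.card (Fin d) : ℂ)) = ((β * d : ℝ) : ℂ) := by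
      push_cast [Fintype.card_fin]; ring
    rw [this, Complex.ofReal_re, hβ, hc]
    field_simp
  have hmem : c ∈ {r : ℝ | ∃ V : Matrix (Fin d) (Fin d) ℂ, V.IsHermitian ∧
      loe (Choi (depol d p)) ((1 : Matrix (Fin d) (Fin d) ℂ) ⊗ₖ V) ∧ r = (V.trace).re} :=
    ⟨V₀, hV₀herm, hfeas, htr.symm⟩
  have hlb : ∀ r ∈ {r : ℝ | ∃ V : Matrix (Fin d) (Fin d) ℂ, V.IsHermitian ∧
      loe (Choi (depol d p)) ((1 : Matrix (Fin d) (Fin d) ℂ) ⊗ₖ V) ∧ r = (V.trace).re},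
      c ≤ r := by
    rintro r ⟨V, hVh, hVle, rfl⟩
    have h0 := Matrix.PosSemidef.dotProduct_mulVec_nonneg hVle (S7.v d)
    rw [Matrix.sub_mulVec, dotProduct_sub, S7.dot_v_kron_v, S7.choi_eq,
      Matrix.add_mulVec, Matrix.smul_mulVec, Matrix.smul_mulVec,
      dotProduct_add, dotProduct_smul, dotProduct_smul,
      S7.dot_v_W_v, S7.dot_v_one_v] at h0
    have hz : ((1 - p : ℝ) : ℂ) • ((d : ℂ) * (d : ℂ)) + ((p / d : ℝ) : ℂ) • (d : ℂ)
        = ((c : ℝ) : ℂ) := by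
      simp only [smul_eq_mul]
      rw [hc]
      push_cast
      field_simp
    rw [hz] at h0
    rw [Complex.le_def] at h0
    have := h0.1
    simpa using this
  have hsdp : sdpVal (Choi (depol d p)) = c := by
    rw [sdpVal]
    exact le_antisymm (csInf_le ⟨c, fun r hr => hlb r hr⟩ hmem) (le_csInf ⟨c, hmem⟩ hlb)
  refine ⟨hsdp, ?_⟩
  rw [SNS0, hsdp]


end
end

section
/- For the qubit amplitude damping channel N_r with Kraus operators E₀ = |0⟩⟨0| + √(1−r)|1⟩⟨1| and E₁ = √r |0⟩⟨1|, 0 ≤ r ≤ 1, the optimal value of inf{ Tr V : J_{N_r} ≤ 1₂ ⊗ V } equals 2(1+√(1−r)) − r, hence S_{NS,0}(N_r) = ½ log₂(2(1+√(1−r)) − r). -/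
open Matrix Kronecker
open scoped ComplexOrder

noncomputable section

/-- Kraus operator `E₀ = |0⟩⟨0| + √(1-r) |1⟩⟨1|` of the amplitude damping channel. -/
def E₀ (r : ℝ) : Matrix (Fin 2) (Fin 2) ℂ := !![1, 0; 0, (Real.sqrt (1 - r) : ℂ)]

/-- Kraus operator `E₁ = √r |0⟩⟨1|` of the amplitude damping channel. -/
def E₁ (r : ℝ) : Matrix (Fin 2) (Fin 2) ℂ := !![0, (Real.sqrt r : ℂ); 0, 0]

/-- The qubit amplitude damping channel `N_r(ρ) = E₀ ρ E₀† + E₁ ρ E₁†`. -/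
def ampDamp (r : ℝ) (ρ : Matrix (Fin 2) (Fin 2) ℂ) : Matrix (Fin 2) (Fin 2) ℂ :=
  E₀ r * ρ * (E₀ r)ᴴ + E₁ r * ρ * (E₁ r)ᴴ

/-! ### Auxiliary lemmas -/

lemma Choi_apply' (Φ : Matrix (Fin 2) (Fin 2) ℂ → Matrix (Fin 2) (Fin 2) ℂ) (i j k l : Fin 2) :
    Choi Φ (i,k) (j,l) = Φ (Matrix.single i j 1) k l := by
  simp [Choi, Matrix.single, Fin.sum_univ_two]
  fin_cases i <;> fin_cases j <;> simp

lemma ampDamp_std (r : ℝ) (hr0 : 0 ≤ r) (hr1 : r ≤ 1) (i j k l : Fin 2) :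
    ampDamp r (Matrix.single i j 1) k l =
      if i = 0 ∧ j = 0 ∧ k = 0 ∧ l = 0 then 1
      else if i = 0 ∧ j = 1 ∧ k = 0 ∧ l = 1 then (Real.sqrt (1-r) : ℂ)
      else if i = 1 ∧ j = 0 ∧ k = 1 ∧ l = 0 then (Real.sqrt (1-r) : ℂ)
      else if i = 1 ∧ j = 1 ∧ k = 1 ∧ l = 1 then ((1-r : ℝ) : ℂ)
      else if i = 1 ∧ j = 1 ∧ k = 0 ∧ l = 0 then (r : ℂ)
      else 0 := by
  have h1 : (Real.sqrt (1-r) : ℂ) * (Real.sqrt (1-r) : ℂ) = ((1-r:ℝ):ℂ) := by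
    rw [← Complex.ofReal_mul, Real.mul_self_sqrt (by linarith)]
  have h2 : (Real.sqrt r : ℂ) * (Real.sqrt r : ℂ) = (r : ℂ) := by
    rw [← Complex.ofReal_mul, Real.mul_self_sqrt hr0]
  fin_cases i <;> fin_cases j <;> fin_cases k <;> fin_cases l <;>
  · simp only [ampDamp, Matrix.add_apply, Matrix.mul_apply, Fin.sum_univ_two,
      Matrix.conjTranspose_apply, Matrix.single, E₀, E₁,
      Matrix.cons_val', Matrix.cons_val_zero, Matrix.cons_val_one, Matrix.head_cons,
      Matrix.head_fin_const, Matrix.empty_val', Matrix.cons_val_fin_one, Matrix.of_apply]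
    norm_num [h1, h2]

/-- The primal optimizer `V = diag(1+√(1-r), √(1-r)+1-r)`. -/
def Vopt (r : ℝ) : Matrix (Fin 2) (Fin 2) ℂ :=
  !![((1 + Real.sqrt (1-r) : ℝ) : ℂ), 0; 0, ((Real.sqrt (1-r) + (1 - r) : ℝ) : ℂ)]

/-- The square-root factor of `1 ⊗ Vopt - J`. -/
def Amat (r : ℝ) : Matrix (Fin 3) (Fin 2 × Fin 2) ℂ :=
  Matrix.of fun m p =>
    if m = 0 then
      (if p.1 = 0 ∧ p.2 = 0 then ((Real.sqrt (Real.sqrt (1-r)) : ℝ) : ℂ)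
       else if p.1 = 1 ∧ p.2 = 1 then -((Real.sqrt (Real.sqrt (1-r)) : ℝ) : ℂ) else 0)
    else if m = 1 then
      (if p.1 = 0 ∧ p.2 = 1 then ((Real.sqrt (Real.sqrt (1-r) + (1 - r)) : ℝ) : ℂ) else 0)
    else
      (if p.1 = 1 ∧ p.2 = 0 then ((Real.sqrt (1 + Real.sqrt (1-r) - r) : ℝ) : ℂ) else 0)

lemma M_eq_AhA (r : ℝ) (hr0 : 0 ≤ r) (hr1 : r ≤ 1) :
    (1 : Matrix (Fin 2) (Fin 2) ℂ) ⊗ₖ Vopt r - Choi (ampDamp r)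
      = (Amat r)ᴴ * Amat r := by
  set s := Real.sqrt (1-r) with hs
  have hs0 : 0 ≤ s := Real.sqrt_nonneg _
  have h1r : 0 ≤ 1 - r := by linarith
  have q1 : ((Real.sqrt s : ℝ) : ℂ) * ((Real.sqrt s : ℝ) : ℂ) = (s : ℂ) := by
    rw [← Complex.ofReal_mul, Real.mul_self_sqrt hs0]
  have q2 : ((Real.sqrt (s + (1-r)) : ℝ) : ℂ) * ((Real.sqrt (s + (1-r)) : ℝ) : ℂ)
      = ((s + (1-r) : ℝ) : ℂ) := by
    rw [← Complex.ofReal_mul, Real.mul_self_sqrt (by linarith)]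
  have q4 : ((Real.sqrt (1 - r + Real.sqrt (1-r)) : ℝ) : ℂ) * ((Real.sqrt (1 - r + Real.sqrt (1-r)) : ℝ) : ℂ)
      = ((1 - r + Real.sqrt (1-r) : ℝ) : ℂ) := by
    rw [← Complex.ofReal_mul, Real.mul_self_sqrt (by linarith [Real.sqrt_nonneg (1-r)])]
  have q3 : ((Real.sqrt (1 + s - r) : ℝ) : ℂ) * ((Real.sqrt (1 + s - r) : ℝ) : ℂ)
      = ((1 + s - r : ℝ) : ℂ) := by
    rw [← Complex.ofReal_mul, Real.mul_self_sqrt (by linarith)]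
  ext ⟨i,k⟩ ⟨j,l⟩
  rw [Matrix.sub_apply, Matrix.kroneckerMap_apply, Choi_apply', ampDamp_std r hr0 hr1,
    Matrix.mul_apply]
  rw [Fin.sum_univ_three]
  fin_cases i <;> fin_cases k <;> fin_cases j <;> fin_cases l <;>
  · simp only [Amat, Vopt, Matrix.one_apply, Matrix.conjTranspose_apply, Matrix.of_apply,
      Matrix.cons_val', Matrix.cons_val_zero, Matrix.cons_val_one, Matrix.head_cons,
      Matrix.empty_val', Matrix.cons_val_fin_one, Matrix.head_fin_const]
    simp [← hs, q1, q2, q3, q4, Complex.conj_ofReal]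

lemma Vopt_herm (r : ℝ) : (Vopt r).IsHermitian := by
  ext i j
  fin_cases i <;> fin_cases j <;>
    simp [Vopt, Matrix.conjTranspose_apply, Complex.conj_ofReal]

/-- The SDP value for the amplitude damping channel equals `2(1+√(1-r)) - r`, hence
`S_{NS,0}(N_r) = ½ log₂ (2(1+√(1-r)) - r)`. -/
theorem stmt_8 (r : ℝ) (hr0 : 0 ≤ r) (hr1 : r ≤ 1) :
    sdpVal (Choi (ampDamp r)) = 2 * (1 + Real.sqrt (1 - r)) - r ∧
    SNS0 (Choi (ampDamp r)) = (1 / 2) * Real.logb 2 (2 * (1 + Real.sqrt (1 - r)) - r) := by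
  set s := Real.sqrt (1-r) with hs
  set c : ℝ := 2 * (1 + s) - r with hc
  -- membership
  have hmem : c ∈ {y : ℝ | ∃ V : Matrix (Fin 2) (Fin 2) ℂ, V.IsHermitian ∧
      loe (Choi (ampDamp r)) ((1 : Matrix (Fin 2) (Fin 2) ℂ) ⊗ₖ V) ∧ y = (V.trace).re} := by
    refine ⟨Vopt r, Vopt_herm r, ?_, ?_⟩
    · unfold loe
      rw [M_eq_AhA r hr0 hr1]
      exact Matrix.posSemidef_conjTranspose_mul_self _
    · simp [Vopt, Matrix.trace_fin_two, hc]
      ring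
  -- lower bound
  have hlb : ∀ y ∈ {y : ℝ | ∃ V : Matrix (Fin 2) (Fin 2) ℂ, V.IsHermitian ∧
      loe (Choi (ampDamp r)) ((1 : Matrix (Fin 2) (Fin 2) ℂ) ⊗ₖ V) ∧ y = (V.trace).re},
      c ≤ y := by
    rintro y ⟨V, hV, hfeas, rfl⟩
    set x : Fin 2 × Fin 2 → ℂ := fun p => if p.1 = p.2 then 1 else 0 with hx
    have h := hfeas.dotProduct_mulVec_nonneg x
    have key : star x ⬝ᵥ (((1 : Matrix (Fin 2) (Fin 2) ℂ) ⊗ₖ V - Choi (ampDamp r)) *ᵥ x)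
        = (V 0 0 + V 1 1) - ((c : ℝ) : ℂ) := by
      simp only [dotProduct, Matrix.mulVec, Fintype.sum_prod_type, Fin.sum_univ_two,
        Matrix.sub_apply, Matrix.kroneckerMap_apply, Matrix.one_apply, hx, Pi.star_apply,
        Choi_apply', ampDamp_std r hr0 hr1]
      norm_num [hc]
      ring
    rw [key] at h
    have h1 := (Complex.le_def.mp h).1
    simp only [Complex.zero_re, Complex.sub_re, Complex.add_re, Complex.ofReal_re] at h1
    rw [Matrix.trace_fin_two]
    simp only [Complex.add_re]
    linarith
  have hval : sdpVal (Choi (ampDamp r)) = c := by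
    unfold sdpVal
    exact le_antisymm (csInf_le ⟨c, hlb⟩ hmem) (le_csInf ⟨c, hmem⟩ hlb)
  exact ⟨hval, by rw [SNS0, hval]⟩

end
end

section
/- For the qubit dephasing channel Z_p(ρ) = (1−p)ρ + p ZρZ with Z = |0⟩⟨0| − |1⟩⟨1| and 0 ≤ p ≤ 1, the optimal value of inf{ Tr V : J_{Z_p} ≤ 1₂ ⊗ V } equals |4p−2| + 2, hence S_{NS,0}(Z_p) = ½ log₂(|4p−2|+2). -/
open Matrix Kronecker
open scoped ComplexOrder

noncomputable section

/-- The Pauli `Z` operator `|0⟩⟨0| - |1⟩⟨1|`. -/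
def Zop : Matrix (Fin 2) (Fin 2) ℂ := !![1, 0; 0, -1]

/-- The qubit dephasing channel `Z_p(ρ) = (1-p) ρ + p Z ρ Z`. -/
def dephasing (p : ℝ) (ρ : Matrix (Fin 2) (Fin 2) ℂ) : Matrix (Fin 2) (Fin 2) ℂ :=
  ((1 - p : ℝ) : ℂ) • ρ + ((p : ℝ) : ℂ) • (Zop * ρ * Zop)


/-- Explicit form of the Choi matrix of the dephasing channel. -/
def Jmat (p : ℝ) : Matrix (Fin 2 × Fin 2) (Fin 2 × Fin 2) ℂ :=
  fun x y => if x.1 = x.2 ∧ y.1 = y.2 then (if x = y then 1 else ((1 - 2*p : ℝ) : ℂ)) else 0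

set_option maxHeartbeats 2000000 in
lemma choi_dephasing_eq (p : ℝ) : Choi (dephasing p) = Jmat p := by
  ext ⟨i,k⟩ ⟨j,l⟩
  fin_cases i <;> fin_cases j <;> fin_cases k <;> fin_cases l <;>
    simp [Choi, Jmat, dephasing, Zop, Fin.sum_univ_two, kroneckerMap_apply,
      Matrix.mul_apply, Matrix.single, Matrix.of_apply, Matrix.vecHead,
      Matrix.vecTail, Function.comp, Pi.smul_apply, smul_eq_mul] <;> ring

set_option maxHeartbeats 2000000 in
lemma feas_psd (p : ℝ) :
    ((1 : Matrix (Fin 2) (Fin 2) ℂ) ⊗ₖ (((|1-2*p|+1 : ℝ) : ℂ) • 1) - Jmat p).PosSemidef := by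
  refine Matrix.PosSemidef.of_dotProduct_mulVec_nonneg ?_ ?_
  · ext ⟨i,k⟩ ⟨j,l⟩
    fin_cases i <;> fin_cases j <;> fin_cases k <;> fin_cases l <;>
      simp [Jmat, Matrix.conjTranspose_apply, Matrix.one_apply, kroneckerMap_apply]
  · intro x
    simp only [dotProduct, Matrix.mulVec, Fintype.sum_prod_type, Fin.sum_univ_two,
      Matrix.sub_apply, kroneckerMap_apply, Matrix.one_apply, Matrix.smul_apply, Jmat,
      Pi.star_apply, smul_eq_mul]
    simp
    set a := x (0,0); set b := x (1,1); set u := x (0,1); set v := x (1,0)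
    rcases abs_cases (1 - 2*p) with ⟨h1, h2⟩ | ⟨h1, h2⟩ <;> rw [h1]
    · have e : (starRingEnd ℂ) a * (↑(1-2*p) * a + (2 * ↑p - 1) * b) +
          (starRingEnd ℂ) u * ((↑(1-2*p) + 1) * u) +
        ((starRingEnd ℂ) v * ((↑(1-2*p) + 1) * v) +
          (starRingEnd ℂ) b * ((2 * ↑p - 1) * a + ↑(1-2*p) * b)) =
          (((1-2*p) * Complex.normSq (a-b) + (2-2*p) * Complex.normSq u
            + (2-2*p) * Complex.normSq v : ℝ) : ℂ) := by
        rw [Complex.ext_iff]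
        constructor <;>
          simp [Complex.normSq_apply, Complex.mul_re, Complex.mul_im] <;> ring
      rw [e, Complex.zero_le_real]
      have h3 := Complex.normSq_nonneg (a-b)
      have h4 := Complex.normSq_nonneg u
      have h5 := Complex.normSq_nonneg v
      nlinarith
    · have e : (starRingEnd ℂ) a * (↑(-(1-2*p)) * a + (2 * ↑p - 1) * b) +
          (starRingEnd ℂ) u * ((↑(-(1-2*p)) + 1) * u) +
        ((starRingEnd ℂ) v * ((↑(-(1-2*p)) + 1) * v) +
          (starRingEnd ℂ) b * ((2 * ↑p - 1) * a + ↑(-(1-2*p)) * b)) =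
          (((2*p-1) * Complex.normSq (a+b) + (2*p) * Complex.normSq u
            + (2*p) * Complex.normSq v : ℝ) : ℂ) := by
        rw [Complex.ext_iff]
        constructor <;>
          simp [Complex.normSq_apply, Complex.mul_re, Complex.mul_im] <;> ring
      rw [e, Complex.zero_le_real]
      have h3 := Complex.normSq_nonneg (a+b)
      have h4 := Complex.normSq_nonneg u
      have h5 := Complex.normSq_nonneg v
      nlinarith

set_option maxHeartbeats 1000000 in
lemma lower_bound (p : ℝ) (V : Matrix (Fin 2) (Fin 2) ℂ)
    (h : ((1 : Matrix (Fin 2) (Fin 2) ℂ) ⊗ₖ V - Jmat p).PosSemidef) :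
    |4*p-2| + 2 ≤ (V.trace).re := by
  have h1 := h.dotProduct_mulVec_nonneg (fun z => if z = (0,0) then 1 else if z = (1,1) then 1 else 0)
  have h2 := h.dotProduct_mulVec_nonneg (fun z => if z = (0,0) then 1 else if z = (1,1) then -1 else 0)
  simp only [dotProduct, Matrix.mulVec, Fintype.sum_prod_type, Fin.sum_univ_two,
    Matrix.sub_apply, kroneckerMap_apply, Matrix.one_apply, Jmat,
    Pi.star_apply, smul_eq_mul] at h1 h2
  simp at h1 h2
  rw [Complex.le_def] at h1 h2
  obtain ⟨h1, -⟩ := h1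
  obtain ⟨h2, -⟩ := h2
  simp [Complex.add_re, Complex.sub_re, Complex.ofReal_re, Complex.mul_re] at h1 h2
  simp [Matrix.trace, Fin.sum_univ_two, Matrix.diag]
  rcases abs_cases (4*p-2) with ⟨e1, _⟩ | ⟨e1, _⟩ <;> rw [e1] <;> linarith

lemma isLeast_sdp (p : ℝ) :
    IsLeast {r : ℝ | ∃ V : Matrix (Fin 2) (Fin 2) ℂ, V.IsHermitian ∧
      loe (Choi (dephasing p)) ((1 : Matrix (Fin 2) (Fin 2) ℂ) ⊗ₖ V) ∧ r = (V.trace).re}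
      (|4 * p - 2| + 2) := by
  have habs : |4*p-2| = 2 * |1-2*p| := by
    rw [show (4*p-2 : ℝ) = 2*(1-2*p)*(-1) by ring, abs_mul, abs_mul]
    simp [abs_of_nonneg]
  constructor
  · refine ⟨((|1-2*p|+1 : ℝ) : ℂ) • 1, ?_, ?_, ?_⟩
    · ext i j
      fin_cases i <;> fin_cases j <;>
        simp [Matrix.conjTranspose_apply, Matrix.one_apply]
    · unfold loe
      rw [choi_dephasing_eq]
      exact feas_psd p
    · simp [Matrix.trace, Fin.sum_univ_two, Matrix.diag, Matrix.smul_apply,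
        Matrix.one_apply, habs]
  · rintro r ⟨V, hV, hle, rfl⟩
    unfold loe at hle
    rw [choi_dephasing_eq] at hle
    exact lower_bound p V hle

theorem stmt_9_aux (p : ℝ) : sdpVal (Choi (dephasing p)) = |4 * p - 2| + 2 :=
  (isLeast_sdp p).csInf_eq

/-- The SDP value for the dephasing channel equals `|4p-2| + 2`, hence
`S_{NS,0}(Z_p) = ½ log₂ (|4p-2| + 2)`. -/
theorem stmt_9 (p : ℝ) (hp0 : 0 ≤ p) (hp1 : p ≤ 1) :
    sdpVal (Choi (dephasing p)) = |4 * p - 2| + 2 ∧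
    SNS0 (Choi (dephasing p)) = (1 / 2) * Real.logb 2 (|4 * p - 2| + 2) := by
  have h1 : sdpVal (Choi (dephasing p)) = |4 * p - 2| + 2 := stmt_9_aux p
  exact ⟨h1, by rw [SNS0, h1]⟩


end
end

section
/- Set equality of smoothing sets: for a pure state φ_{AA'} and a state ρ_{AB} with φ_A = ρ_A, the set { N_{A'→B}(φ_{AA'}) : N a CPTP map, P(N(φ), ρ) ≤ ε } equals the set { σ_{AB} : P(σ, ρ) ≤ ε, σ_A = ρ_A }, where P is the purified distance. -/
open Matrix Kronecker
open scoped ComplexOrder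

noncomputable section

/-- Partial trace over the second (B) factor. -/
def ptrSnd {a b : Type*} [Fintype b] (X : Matrix (a × b) (a × b) ℂ) : Matrix a a ℂ :=
  fun i j => ∑ k, X (i, k) (j, k)

/-- A density matrix: positive semidefinite with unit trace. -/
def IsDensity {n : Type*} [Fintype n] (ρ : Matrix n n ℂ) : Prop :=
  ρ.PosSemidef ∧ ρ.trace = 1

open scoped Classical in
/-- The positive square root of a positive semidefinite matrix (junk value `0` otherwise). -/
def msqrt {n : Type*} [Fintype n] [DecidableEq n] (A : Matrix n n ℂ) : Matrix n n ℂ :=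
  if h : A.PosSemidef then
    (h.1.eigenvectorUnitary : Matrix n n ℂ) *
      diagonal ((↑) ∘ Real.sqrt ∘ h.1.eigenvalues) * (star (h.1.eigenvectorUnitary : Matrix n n ℂ))
  else 0

/-- The trace norm `‖M‖₁ = Tr √(M†M)`. -/
def traceNorm {m n : Type*} [Fintype m] [Fintype n] [DecidableEq n] (M : Matrix m n ℂ) : ℝ :=
  ((msqrt (Mᴴ * M)).trace).re

/-- The fidelity `F(ρ,σ) = ‖√ρ √σ‖₁`. -/
def fid {n : Type*} [Fintype n] [DecidableEq n] (ρ σ : Matrix n n ℂ) : ℝ :=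
  traceNorm (msqrt ρ * msqrt σ)

/-- The purified distance `P(ρ,σ) = √(1 - F(ρ,σ)²)`. -/
def pdist {n : Type*} [Fintype n] [DecidableEq n] (ρ σ : Matrix n n ℂ) : ℝ :=
  Real.sqrt (1 - (fid ρ σ) ^ 2)

/-- The rank-one projection `|ψ⟩⟨ψ|` associated to a vector `ψ`. -/
def proj {n : Type*} (ψ : n → ℂ) : Matrix n n ℂ :=
  Matrix.vecMulVec ψ (fun i => (starRingEnd ℂ) (ψ i))

/-- Apply the channel with Choi matrix `C` (a map `A' → B`) to the second subsystem of a
bipartite operator on `A ⊗ A'`, yielding an operator on `A ⊗ B`: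
`(id_A ⊗ Φ_C)(X)((i,k),(j,l)) = ∑_{m,n} X((i,m),(j,n)) C((m,k),(n,l))`. -/
def applyChoiSnd {a a' b : Type*} [Fintype a'] (C : Matrix (a' × b) (a' × b) ℂ)
    (X : Matrix (a × a') (a × a') ℂ) : Matrix (a × b) (a × b) ℂ :=
  fun p q => ∑ m, ∑ n, X (p.1, m) (q.1, n) * C (m, p.2) (n, q.2)

set_option linter.unusedSectionVars false

namespace AuxCJ

/-! ### generic helper lemmas -/

section Helpers

variable {a a' b : Type*} [Fintype a] [DecidableEq a] [Fintype a'] [DecidableEq a']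
    [Fintype b] [DecidableEq b]

lemma kron_one_conjTranspose (M : Matrix a a' ℂ) :
    (M ⊗ₖ (1 : Matrix b b ℂ))ᴴ = Mᴴ ⊗ₖ (1 : Matrix b b ℂ) := by
  ext ⟨i, k⟩ ⟨j, l⟩
  by_cases h : k = l <;>
    simp [Matrix.conjTranspose_apply, Matrix.kroneckerMap_apply, Matrix.one_apply, h, eq_comm]

lemma sub_kron_one (M N : Matrix a a' ℂ) :
    (M - N) ⊗ₖ (1 : Matrix b b ℂ) = M ⊗ₖ (1 : Matrix b b ℂ) - N ⊗ₖ (1 : Matrix b b ℂ) := by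
  ext ⟨i, k⟩ ⟨j, l⟩
  simp [Matrix.kroneckerMap_apply, Matrix.sub_apply, sub_mul]

lemma one_kron_one :
    (1 : Matrix a a ℂ) ⊗ₖ (1 : Matrix b b ℂ) = (1 : Matrix (a × b) (a × b) ℂ) :=
  Matrix.one_kronecker_one

lemma trace_ptrSnd (X : Matrix (a × b) (a × b) ℂ) : (ptrSnd X).trace = X.trace := by
  simp [Matrix.trace, ptrSnd, Matrix.diag, Fintype.sum_prod_type]

lemma ptrSnd_mul_kron (M : Matrix a a' ℂ) (N : Matrix a' a ℂ) (X : Matrix (a' × b) (a' × b) ℂ) :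
    ptrSnd ((M ⊗ₖ (1 : Matrix b b ℂ)) * X * (N ⊗ₖ (1 : Matrix b b ℂ))) = M * ptrSnd X * N := by
  ext i j
  simp only [ptrSnd, Matrix.mul_apply, Matrix.kroneckerMap_apply, Matrix.one_apply,
    Fintype.sum_prod_type, mul_ite, ite_mul, mul_zero, zero_mul, mul_one, one_mul,
    Finset.sum_ite_eq, Finset.sum_ite_eq', Finset.mem_univ, if_true, Finset.sum_mul,
    Finset.mul_sum]
  rw [Finset.sum_comm]
  exact Finset.sum_congr rfl fun n _ => Finset.sum_comm

lemma ptrSnd_smul (c : ℂ) (X : Matrix (a × b) (a × b) ℂ) :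
    ptrSnd (c • X) = c • ptrSnd X := by
  ext i j
  simp [ptrSnd, Finset.mul_sum]

lemma ptrSnd_add (X Y : Matrix (a × b) (a × b) ℂ) :
    ptrSnd (X + Y) = ptrSnd X + ptrSnd Y := by
  ext i j
  simp [ptrSnd, Finset.sum_add_distrib]

lemma ptrSnd_kron_one (M : Matrix a a ℂ) :
    ptrSnd (M ⊗ₖ (1 : Matrix b b ℂ)) = (Fintype.card b : ℂ) • M := by
  ext i j
  simp [ptrSnd, Matrix.kroneckerMap_apply, Matrix.one_apply, Finset.sum_mul, mul_comm]

lemma trace_mul_kron (X : Matrix (a × b) (a × b) ℂ) (M : Matrix a a ℂ) :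
    (X * (M ⊗ₖ (1 : Matrix b b ℂ))).trace = (ptrSnd X * M).trace := by
  simp only [Matrix.trace, Matrix.diag, Matrix.mul_apply, ptrSnd, Matrix.kroneckerMap_apply,
    Matrix.one_apply, Fintype.sum_prod_type, mul_ite, mul_one, mul_zero, Finset.sum_ite_eq',
    Finset.mem_univ, if_true, Finset.sum_mul]
  exact Finset.sum_congr rfl fun x _ => Finset.sum_comm

lemma applyChoiSnd_proj (C : Matrix (a' × b) (a' × b) ℂ) (φ : a × a' → ℂ) :
    applyChoiSnd C (proj φ) =
      ((Matrix.of fun i m => φ (i, m)) ⊗ₖ (1 : Matrix b b ℂ)) * C *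
        ((Matrix.of fun i m => φ (i, m))ᴴ ⊗ₖ (1 : Matrix b b ℂ)) := by
  ext ⟨i, k⟩ ⟨j, l⟩
  simp only [applyChoiSnd, proj, Matrix.vecMulVec_apply, Matrix.mul_apply,
    Matrix.kroneckerMap_apply, Matrix.one_apply, Matrix.conjTranspose_apply, Matrix.of_apply,
    Fintype.sum_prod_type, ite_mul, mul_ite, zero_mul, mul_zero, one_mul, mul_one,
    Finset.sum_ite_eq, Finset.sum_ite_eq', Finset.mem_univ, if_true, Finset.sum_mul,
    Finset.mul_sum, starRingEnd_apply]
  rw [Finset.sum_comm]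
  refine Finset.sum_congr rfl fun m _ => Finset.sum_congr rfl fun n _ => ?_
  ring

lemma ptrSnd_applyChoiSnd (C : Matrix (a' × b) (a' × b) ℂ) (X : Matrix (a × a') (a × a') ℂ)
    (hC : ptrSnd C = 1) : ptrSnd (applyChoiSnd C X) = ptrSnd X := by
  ext i j
  have h : ∀ m n : a', ∑ k, C (m, k) (n, k) = if m = n then 1 else 0 := by
    intro m n
    have := congrFun (congrFun hC m) n
    simpa [ptrSnd, Matrix.one_apply] using this
  simp only [ptrSnd, applyChoiSnd]
  rw [Finset.sum_comm]
  refine Finset.sum_congr rfl fun m _ => ?_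
  rw [Finset.sum_comm]
  simp only [← Finset.mul_sum, h, mul_ite, mul_one, mul_zero, Finset.sum_ite_eq',
    Finset.mem_univ, if_true]
  simp

lemma ptrSnd_proj (φ : a × a' → ℂ) :
    ptrSnd (proj φ) =
      (Matrix.of fun i m => φ (i, m)) * (Matrix.of fun i m => φ (i, m))ᴴ := by
  ext i j
  simp [ptrSnd, proj, Matrix.vecMulVec_apply, Matrix.mul_apply, Matrix.conjTranspose_apply]

lemma eq_zero_of_trace_mul_conjTranspose {m n : Type*} [Fintype m] [Fintype n]
    (B : Matrix m n ℂ) (h : (B * Bᴴ).trace = 0) : B = 0 := by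
  have h2 : ∀ i j, B i j = 0 := by
    have : (∑ i, ∑ j, Complex.normSq (B i j) : ℝ) = 0 := by
      have := congrArg Complex.re h
      simpa [Matrix.trace, Matrix.diag, Matrix.mul_apply, Matrix.conjTranspose_apply,
        Complex.mul_conj, Complex.re_sum] using this
    intro i j
    have hi := (Finset.sum_eq_zero_iff_of_nonneg (fun i _ =>
      Finset.sum_nonneg fun j _ => Complex.normSq_nonneg _)).1 this i (Finset.mem_univ i)
    have hj := (Finset.sum_eq_zero_iff_of_nonneg (fun j _ =>
      Complex.normSq_nonneg _)).1 hi j (Finset.mem_univ j)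
    exact Complex.normSq_eq_zero.1 hj
  ext i j; exact h2 i j

open scoped MatrixOrder in
/-- If `σ` is PSD, `R` is a Hermitian idempotent and `Tr[σ R] = 0`, then `R σ = σ R = 0`. -/
lemma psd_mul_eq_zero {N : Type*} [Fintype N] [DecidableEq N] {σ R : Matrix N N ℂ}
    (hσ : σ.PosSemidef) (hRH : Rᴴ = R) (hR2 : R * R = R) (htr : (σ * R).trace = 0) :
    R * σ = 0 ∧ σ * R = 0 := by
  set S := CFC.sqrt σ with hS
  have hSH : Sᴴ = S := (CFC.sqrt_nonneg σ).posSemidef.1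
  have hSS : S * S = σ := CFC.sqrt_mul_sqrt_self σ hσ.nonneg
  have hB : (R * S) * (R * S)ᴴ = R * σ * R := by
    rw [Matrix.conjTranspose_mul, hSH, hRH]
    rw [show R * S * (S * R) = R * (S * S) * R by simp only [Matrix.mul_assoc], hSS]
  have htr2 : ((R * S) * (R * S)ᴴ).trace = 0 := by
    rw [hB, Matrix.trace_mul_cycle, hR2, Matrix.trace_mul_comm]
    exact htr
  have hRS : R * S = 0 := eq_zero_of_trace_mul_conjTranspose _ htr2
  have hRσ : R * σ = 0 := by
    rw [← hSS, ← Matrix.mul_assoc, hRS, Matrix.zero_mul]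
  refine ⟨hRσ, ?_⟩
  have : (R * σ)ᴴ = σ * R := by rw [Matrix.conjTranspose_mul, hRH, hσ.1.eq]
  rw [← this, hRσ, Matrix.conjTranspose_zero]

end Helpers

/-! ### pseudoinverse of a PSD matrix -/

section Pinv

variable {n : Type*} [Fintype n] [DecidableEq n]

lemma conj_diag_mul (U : Matrix n n ℂ) (hU : star U * U = 1) (d e : n → ℂ) :
    (U * diagonal d * star U) * (U * diagonal e * star U) =
      U * diagonal (fun i => d i * e i) * star U := by
  have : (U * diagonal d * star U) * (U * diagonal e * star U)
      = U * (diagonal d * (star U * U) * diagonal e) * star U := by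
    simp only [Matrix.mul_assoc]
  rw [this, hU, Matrix.mul_one, Matrix.diagonal_mul_diagonal]

variable {G : Matrix n n ℂ} (hG : G.PosSemidef)

def pinv : Matrix n n ℂ :=
  (hG.1.eigenvectorUnitary : Matrix n n ℂ) *
    diagonal (fun i => ((RCLike.ofReal (hG.1.eigenvalues i) : ℂ))⁻¹) *
    star (hG.1.eigenvectorUnitary : Matrix n n ℂ)

lemma pinv_spec : ∃ (U : Matrix n n ℂ) (d : n → ℂ), star U * U = 1 ∧ (∀ i, star (d i) = d i) ∧
    G = U * diagonal d * star U ∧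
    pinv hG = U * diagonal (fun i => (d i)⁻¹) * star U := by
  refine ⟨(hG.1.eigenvectorUnitary : Matrix n n ℂ),
    fun i => (RCLike.ofReal (hG.1.eigenvalues i) : ℂ),
    (Unitary.mem_iff.mp (hG.1.eigenvectorUnitary).2).1,
    fun i => by rw [← starRingEnd_apply]; exact RCLike.conj_ofReal _,
    ?_, rfl⟩
  have := hG.1.spectral_theorem
  rw [Unitary.conjStarAlgAut_apply] at this
  exact this

lemma diag_congr (U : Matrix n n ℂ) {f g : n → ℂ} (h : ∀ i, f i = g i) :
    U * diagonal f * star U = U * diagonal g * star U := by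
  rw [funext h]

lemma pinv_conjTranspose : (pinv hG)ᴴ = pinv hG := by
  obtain ⟨U, d, hU, hd, hGe, hPe⟩ := pinv_spec hG
  rw [hPe, Matrix.star_eq_conjTranspose, Matrix.conjTranspose_mul, Matrix.conjTranspose_mul,
    Matrix.conjTranspose_conjTranspose, Matrix.diagonal_conjTranspose, ← Matrix.mul_assoc,
    ← Matrix.star_eq_conjTranspose]
  exact diag_congr U fun i => by rw [Pi.star_apply, star_inv₀, hd]

lemma mul_pinv_mul : G * pinv hG * G = G := by
  obtain ⟨U, d, hU, hd, hGe, hPe⟩ := pinv_spec hG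
  rw [hPe, hGe, conj_diag_mul _ hU, conj_diag_mul _ hU]
  exact diag_congr U fun i => by
    rcases eq_or_ne (d i) 0 with h | h
    · simp [h]
    · field_simp

lemma pinv_mul_pinv : pinv hG * G * pinv hG = pinv hG := by
  obtain ⟨U, d, hU, hd, hGe, hPe⟩ := pinv_spec hG
  rw [hPe, hGe, conj_diag_mul _ hU, conj_diag_mul _ hU]
  exact diag_congr U fun i => by
    rcases eq_or_ne (d i) 0 with h | h
    · simp [h]
    · field_simp

lemma mul_pinv_comm : G * pinv hG = pinv hG * G := by
  obtain ⟨U, d, hU, hd, hGe, hPe⟩ := pinv_spec hG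
  rw [hPe, hGe, conj_diag_mul _ hU, conj_diag_mul _ hU]
  exact diag_congr U fun i => mul_comm _ _

end Pinv

end AuxCJ

/-- Set equality of smoothing sets: for a pure state `φ_{AA'}` and a state `ρ_{AB}` with
`φ_A = ρ_A`, the set of outputs `N_{A'→B}(φ_{AA'})` of CPTP maps `N` (represented by their
Choi matrices) that are `ε`-close to `ρ` in purified distance equals the set of states
`σ_{AB}` that are `ε`-close to `ρ` with `σ_A = ρ_A`. -/
theorem stmt_12 {a a' b : Type*} [Fintype a] [DecidableEq a] [Fintype a'] [DecidableEq a']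
    [Fintype b] [DecidableEq b]
    (φ : a × a' → ℂ) (hφ : (proj φ).trace = 1)
    (ρ : Matrix (a × b) (a × b) ℂ) (hρ : IsDensity ρ)
    (hmarg : ptrSnd (proj φ) = ptrSnd ρ) (ε : ℝ) :
    {τ : Matrix (a × b) (a × b) ℂ |
        ∃ C : Matrix (a' × b) (a' × b) ℂ, C.PosSemidef ∧ ptrSnd C = 1 ∧
          τ = applyChoiSnd C (proj φ) ∧ pdist τ ρ ≤ ε} =
      {σ : Matrix (a × b) (a × b) ℂ |
        IsDensity σ ∧ pdist σ ρ ≤ ε ∧ ptrSnd σ = ptrSnd ρ} := by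
  ext σ
  simp only [Set.mem_setOf_eq]
  constructor
  · rintro ⟨C, hCpsd, hC1, rfl, hdist⟩
    have hrep := AuxCJ.applyChoiSnd_proj (b := b) C φ
    refine ⟨⟨?_, ?_⟩, hdist, ?_⟩
    · rw [hrep, ← AuxCJ.kron_one_conjTranspose]
      exact hCpsd.mul_mul_conjTranspose_same _
    · rw [← AuxCJ.trace_ptrSnd, AuxCJ.ptrSnd_applyChoiSnd C _ hC1, AuxCJ.trace_ptrSnd, hφ]
    · rw [AuxCJ.ptrSnd_applyChoiSnd C _ hC1, hmarg]
  · rintro ⟨⟨hσpsd, hσtr⟩, hdist, hσm⟩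
    have hbne : Nonempty b := by
      by_contra h
      rw [not_nonempty_iff] at h
      rw [Matrix.trace_eq_zero_of_isEmpty] at hσtr
      exact one_ne_zero hσtr.symm
    have hcard : (Fintype.card b : ℂ) ≠ 0 :=
      Nat.cast_ne_zero.mpr Fintype.card_ne_zero
    set V : Matrix a a' ℂ := Matrix.of fun i m => φ (i, m) with hV
    set G : Matrix a a ℂ := V * Vᴴ with hGdef
    have hGσ : ptrSnd σ = G := by
      rw [hσm, ← hmarg, AuxCJ.ptrSnd_proj]
    have hGpsd : G.PosSemidef := Matrix.posSemidef_self_mul_conjTranspose V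
    set Gp := AuxCJ.pinv hGpsd with hGp
    set P := G * Gp with hPdef
    have hPH : Pᴴ = P := by
      rw [hPdef, Matrix.conjTranspose_mul, AuxCJ.pinv_conjTranspose, hGpsd.1.eq,
        ← AuxCJ.mul_pinv_comm]
    have hPG : P * G = G := by rw [hPdef]; exact AuxCJ.mul_pinv_mul hGpsd
    have hGP : G * P = G := by
      rw [hPdef, AuxCJ.mul_pinv_comm, ← Matrix.mul_assoc]
      exact AuxCJ.mul_pinv_mul hGpsd
    have hPP : P * P = P := by
      rw [hPdef]
      calc G * Gp * (G * Gp) = (G * Gp * G) * Gp := by simp only [Matrix.mul_assoc]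
        _ = G * Gp := by rw [AuxCJ.mul_pinv_mul hGpsd]
    have hPV : P * V = V := by
      have h0 : (1 - P) * G * (1 - P) = 0 := by
        have hexp : (1 - P) * G * (1 - P) = G - P * G - G * P + P * G * P := by noncomm_ring
        rw [hexp, hPG, hGP]
        abel
      have h1 : ((1 - P) * V) * ((1 - P) * V)ᴴ = 0 := by
        rw [Matrix.conjTranspose_mul, Matrix.conjTranspose_sub, Matrix.conjTranspose_one, hPH]
        calc (1 - P) * V * (Vᴴ * (1 - P)) = (1 - P) * (V * Vᴴ) * (1 - P) := by
              simp only [Matrix.mul_assoc]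
          _ = 0 := by rw [← hGdef]; exact h0
      have h2 : (1 - P) * V = 0 := Matrix.self_mul_conjTranspose_eq_zero.mp h1
      have h3 : V - P * V = 0 := by rwa [Matrix.sub_mul, Matrix.one_mul] at h2
      exact (sub_eq_zero.mp h3).symm
    set W := Vᴴ * Gp with hWdef
    have hVW : V * W = P := by rw [hWdef, ← Matrix.mul_assoc, ← hGdef, hPdef]
    have hWH : Wᴴ = Gp * V := by
      rw [hWdef, Matrix.conjTranspose_mul, AuxCJ.pinv_conjTranspose,
        Matrix.conjTranspose_conjTranspose]
    set Q := W * V with hQdef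
    have hQH : Qᴴ = Q := by
      rw [hQdef, Matrix.conjTranspose_mul, hWH, hWdef, ← Matrix.mul_assoc]
    have hQQ : Q * Q = Q := by
      rw [hQdef, hWdef]
      calc Vᴴ * Gp * V * (Vᴴ * Gp * V) = Vᴴ * (Gp * (V * Vᴴ) * Gp) * V := by
            simp only [Matrix.mul_assoc]
        _ = Vᴴ * (Gp * G * Gp) * V := by rw [← hGdef]
        _ = Vᴴ * Gp * V := by rw [AuxCJ.pinv_mul_pinv hGpsd, Matrix.mul_assoc]
    have hVQ : V * Q = V := by rw [hQdef, ← Matrix.mul_assoc, hVW, hPV]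
    have hWGW : W * G * Wᴴ = Q := by
      rw [hWH, hWdef, hQdef, hWdef]
      calc Vᴴ * Gp * G * (Gp * V) = Vᴴ * (Gp * G * Gp) * V := by simp only [Matrix.mul_assoc]
        _ = Vᴴ * Gp * V := by rw [AuxCJ.pinv_mul_pinv hGpsd, Matrix.mul_assoc]
    -- the correction term
    set c : ℝ := ((Fintype.card b : ℝ))⁻¹ with hc
    have hc0 : (0:ℝ) ≤ c := by positivity
    set X := (1 - Q) ⊗ₖ (1 : Matrix b b ℂ) with hX
    have hXH : Xᴴ = X := by
      rw [hX, AuxCJ.kron_one_conjTranspose, Matrix.conjTranspose_sub, Matrix.conjTranspose_one,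
        hQH]
    have hQ1 : (1 - Q) * (1 - Q) = 1 - Q := by
      have h1 : (1 - Q) * (1 - Q) = 1 - Q - Q + Q * Q := by noncomm_ring
      rw [h1, hQQ]
      abel
    have hXX : X * X = X := by
      rw [hX, ← Matrix.mul_kronecker_mul, Matrix.one_mul, hQ1]
    set B := (Real.sqrt c : ℂ) • X with hB
    have hBB : B * Bᴴ = (c:ℂ) • X := by
      rw [hB, Matrix.conjTranspose_smul, Matrix.smul_mul, Matrix.mul_smul, smul_smul, hXH, hXX]
      congr 1
      rw [Complex.star_def, Complex.conj_ofReal, ← Complex.ofReal_mul, Real.mul_self_sqrt hc0]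
    set C : Matrix (a' × b) (a' × b) ℂ :=
      (W ⊗ₖ (1 : Matrix b b ℂ)) * σ * (W ⊗ₖ (1 : Matrix b b ℂ))ᴴ + B * Bᴴ with hCdef
    have hCpsd : C.PosSemidef := by
      rw [hCdef]
      exact (hσpsd.mul_mul_conjTranspose_same _).add (Matrix.posSemidef_self_mul_conjTranspose B)
    have hC1 : ptrSnd C = 1 := by
      rw [hCdef, AuxCJ.ptrSnd_add, hBB, AuxCJ.ptrSnd_smul, AuxCJ.kron_one_conjTranspose,
        AuxCJ.ptrSnd_mul_kron, hGσ, hWGW, hX, AuxCJ.ptrSnd_kron_one, smul_smul]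
      have hone : (c:ℂ) * (Fintype.card b : ℂ) = 1 := by
        rw [hc]
        push_cast
        exact inv_mul_cancel₀ hcard
      rw [hone, one_smul]
      abel
    refine ⟨C, hCpsd, hC1, ?_, hdist⟩
    -- σ = applyChoiSnd C (proj φ)
    rw [AuxCJ.applyChoiSnd_proj, ← hV]
    have hexpand : (V ⊗ₖ (1 : Matrix b b ℂ)) * C * (Vᴴ ⊗ₖ (1 : Matrix b b ℂ)) =
        ((V * W) ⊗ₖ (1 : Matrix b b ℂ)) * σ * ((V * W) ⊗ₖ (1 : Matrix b b ℂ))ᴴ +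
          (c:ℂ) • (((V * (1 - Q) * Vᴴ)) ⊗ₖ (1 : Matrix b b ℂ)) := by
      rw [hCdef]
      rw [Matrix.mul_add, Matrix.add_mul, hBB]
      congr 1
      · rw [AuxCJ.kron_one_conjTranspose, AuxCJ.kron_one_conjTranspose]
        calc (V ⊗ₖ (1 : Matrix b b ℂ)) * ((W ⊗ₖ (1 : Matrix b b ℂ)) * σ *
                (Wᴴ ⊗ₖ (1 : Matrix b b ℂ))) * (Vᴴ ⊗ₖ (1 : Matrix b b ℂ))
            = ((V ⊗ₖ (1 : Matrix b b ℂ)) * (W ⊗ₖ (1 : Matrix b b ℂ))) * σ *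
                ((Wᴴ ⊗ₖ (1 : Matrix b b ℂ)) * (Vᴴ ⊗ₖ (1 : Matrix b b ℂ))) := by
              simp only [Matrix.mul_assoc]
          _ = _ := by
              rw [← Matrix.mul_kronecker_mul, ← Matrix.mul_kronecker_mul, Matrix.one_mul,
                show (V * W)ᴴ = Wᴴ * Vᴴ from Matrix.conjTranspose_mul V W]
      · rw [hX, Matrix.mul_smul, Matrix.smul_mul]
        congr 1
        rw [← Matrix.mul_kronecker_mul, ← Matrix.mul_kronecker_mul, Matrix.one_mul,
          Matrix.one_mul, Matrix.mul_assoc]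
    rw [hexpand, hVW]
    have hzero : V * (1 - Q) * Vᴴ = 0 := by
      rw [Matrix.mul_sub, Matrix.mul_one, hVQ, sub_self, Matrix.zero_mul]
    rw [hzero, Matrix.zero_kronecker, smul_zero, add_zero]
    -- now: σ = (P ⊗ₖ 1) * σ * (P ⊗ₖ 1)ᴴ
    rw [AuxCJ.kron_one_conjTranspose, hPH]
    set R : Matrix (a × b) (a × b) ℂ := (1 - P) ⊗ₖ (1 : Matrix b b ℂ) with hRdef
    have hRH : Rᴴ = R := by
      rw [hRdef, AuxCJ.kron_one_conjTranspose, Matrix.conjTranspose_sub,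
        Matrix.conjTranspose_one, hPH]
    have hP1 : (1 - P) * (1 - P) = 1 - P := by
      have h1 : (1 - P) * (1 - P) = 1 - P - P + P * P := by noncomm_ring
      rw [h1, hPP]
      abel
    have hRR : R * R = R := by
      rw [hRdef, ← Matrix.mul_kronecker_mul, Matrix.one_mul, hP1]
    have htr0 : (σ * R).trace = 0 := by
      rw [hRdef, AuxCJ.trace_mul_kron, hGσ, Matrix.mul_sub, Matrix.mul_one, hGP,
        Matrix.trace_sub, sub_self]
    obtain ⟨hRσ, hσR⟩ := AuxCJ.psd_mul_eq_zero hσpsd hRH hRR htr0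
    have hPk : (P ⊗ₖ (1 : Matrix b b ℂ)) = 1 - R := by
      rw [hRdef, AuxCJ.sub_kron_one, AuxCJ.one_kron_one]
      abel
    rw [hPk]
    have hfin : (1 - R) * σ * (1 - R) = σ - R * σ - σ * R + R * σ * R := by noncomm_ring
    rw [hfin, hRσ, hσR, Matrix.zero_mul]
    abel

end
end
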